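/- Let T > 0. Let v, w : [0,T] × [0,1] → ℝ be continuous, continuously differentiable in the spatial variable x, with v(t,0) = v(t,1) = w(t,0) = w(t,1) = 0 for all t ∈ [0,T], and let φ : [0,1] → ℝ be continuously differentiable with φ(0) = φ(1) = 0. Then |∫₀ᵀ ∫₀¹ (v ∂_x v − w ∂_x w)(t,x) φ(x) dx dt| ≤ (1/2) (∫₀¹ φ′(x)² dx)^{1/2} · (∫₀ᵀ [∫₀¹ (v+w)(t,x)² dx + ∫₀¹ (∂_x(v+w))(t,x)² dx] dt)^{1/2} · (∫₀ᵀ ∫₀¹ (v−w)(t,x)² dx dt)^{1/2}. (This is the estimate in Step 2 of the proof of Lemma 2.4, which transfers strong L²(0,T;L²[0,1]) convergence of the Galerkin approximations to convergence of the nonlinear terms.) -/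

import Mathlib

open MeasureTheory intervalIntegral Set

/-!
Since `v vₓ - w wₓ = ½ ∂ₓ((v + w)(v - w))`, integrating by parts against `φ` moves the
derivative onto `φ`. At each time, Cauchy–Schwarz in `x` against `v - w`, together with the
one-dimensional Sobolev bound `sup |v + w|² ≤ ‖v + w‖²_{L²} + ‖∂ₓ(v + w)‖²_{L²}` (valid because
`v + w` vanishes at `x = 0`), bounds the spatial integral by
`½ ‖φ'‖ ‖v + w‖_{H¹} ‖v - w‖`; Cauchy–Schwarz in `t` finishes the estimate.
-/

theorem abs_integral_mul_le_sqrt_mul_sqrt {α : Type*} [MeasurableSpace α] {μ : Measure α}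
    {f g : α → ℝ} (hf : Integrable (fun x ↦ f x ^ 2) μ) (hg : Integrable (fun x ↦ g x ^ 2) μ)
    (hfg : Integrable (fun x ↦ f x * g x) μ) :
    |∫ x, f x * g x ∂μ| ≤ √(∫ x, f x ^ 2 ∂μ) * √(∫ x, g x ^ 2 ∂μ) := by
  have hquad (s : ℝ) : 0 ≤ (∫ x, g x ^ 2 ∂μ) * (s * s) + 2 * (∫ x, f x * g x ∂μ) * s
      + ∫ x, f x ^ 2 ∂μ := by
    have hexp : (fun x ↦ (f x + s * g x) ^ 2)
        = fun x ↦ f x ^ 2 + (2 * s) * (f x * g x) + s ^ 2 * g x ^ 2 := by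
      ext x; ring
    have hnonneg : 0 ≤ ∫ x, (f x + s * g x) ^ 2 ∂μ := integral_nonneg fun x ↦ sq_nonneg _
    rw [hexp, integral_add ?_ (hg.const_mul _), integral_add hf (hfg.const_mul _),
      MeasureTheory.integral_const_mul, MeasureTheory.integral_const_mul] at hnonneg
    · linarith
    · exact hf.add (hfg.const_mul _)
  have hdisc := discrim_le_zero hquad
  rw [discrim] at hdisc
  rw [← Real.sqrt_mul (integral_nonneg fun x ↦ sq_nonneg _), ← Real.sqrt_sq_eq_abs]
  exact Real.sqrt_le_sqrt (by nlinarith)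

theorem abs_intervalIntegral_mul_le_sqrt_mul_sqrt {a b : ℝ} (hab : a ≤ b) {f g : ℝ → ℝ}
    (hf : Continuous f) (hg : Continuous g) :
    |∫ x in a..b, f x * g x| ≤ √(∫ x in a..b, f x ^ 2) * √(∫ x in a..b, g x ^ 2) := by
  simp only [integral_of_le hab]
  exact abs_integral_mul_le_sqrt_mul_sqrt (hf.pow 2).integrableOn_Ioc (hg.pow 2).integrableOn_Ioc
    (hf.mul hg).integrableOn_Ioc

theorem sq_le_integral_sq_add_integral_deriv_sq {f f' : ℝ → ℝ} {a b x : ℝ}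
    (hf' : Continuous f') (hf : ∀ y, HasDerivAt f (f' y) y) (ha : f a = 0) (hx : x ∈ Icc a b) :
    f x ^ 2 ≤ (∫ y in a..b, f y ^ 2) + ∫ y in a..b, f' y ^ 2 := by
  have hfc : Continuous f := continuous_iff_continuousAt.2 fun y ↦ (hf y).continuousAt
  have hsq (y : ℝ) : HasDerivAt (f ^ 2) (2 * f y * f' y) y := by
    simpa using (hf y).pow 2
  have hsum : Continuous fun y ↦ f y ^ 2 + f' y ^ 2 := by fun_prop
  calc f x ^ 2 = ∫ y in a..x, 2 * f y * f' y := by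
        rw [integral_eq_sub_of_hasDerivAt (fun y _ ↦ hsq y)
          ((by fun_prop : Continuous _).intervalIntegrable _ _)]
        simp [ha]
    _ ≤ ∫ y in a..x, (f y ^ 2 + f' y ^ 2) :=
        integral_mono_on hx.1 ((by fun_prop : Continuous _).intervalIntegrable _ _)
          (hsum.intervalIntegrable _ _) fun y _ ↦ two_mul_le_add_sq _ _
    _ ≤ ∫ y in a..b, (f y ^ 2 + f' y ^ 2) :=
        integral_mono_interval le_rfl hx.1 hx.2 (.of_forall fun y ↦ by positivity)
          (hsum.intervalIntegrable _ _)
    _ = (∫ y in a..b, f y ^ 2) + ∫ y in a..b, f' y ^ 2 :=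
        integral_add ((hfc.pow 2).intervalIntegrable _ _) ((hf'.pow 2).intervalIntegrable _ _)

theorem integral_mul_deriv_sub_mul_deriv_mul_eq {a b : ℝ} {f f' g g' φ φ' : ℝ → ℝ}
    (hf' : Continuous f') (hg' : Continuous g') (hφ' : Continuous φ')
    (hf : ∀ x, HasDerivAt f (f' x) x) (hg : ∀ x, HasDerivAt g (g' x) x)
    (hφ : ∀ x, HasDerivAt φ (φ' x) x) (hφa : φ a = 0) (hφb : φ b = 0) :
    ∫ x in a..b, (f x * f' x - g x * g' x) * φ x
      = -(1 / 2) * ∫ x in a..b, (f x + g x) * (f x - g x) * φ' x := by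
  have hfc : Continuous f := continuous_iff_continuousAt.2 fun y ↦ (hf y).continuousAt
  have hgc : Continuous g := continuous_iff_continuousAt.2 fun y ↦ (hg y).continuousAt
  have hhalf (x : ℝ) : HasDerivAt (fun y ↦ (f y + g y) * (f y - g y) / 2)
      (f x * f' x - g x * g' x) x := by
    refine ((((hf x).add (hg x)).mul ((hf x).sub (hg x))).div_const 2).congr_deriv ?_
    simp only [Pi.add_apply, Pi.sub_apply]
    ring
  have hibp := integral_mul_deriv_eq_deriv_mul (fun x _ ↦ hφ x) (fun x _ ↦ hhalf x)
    (hφ'.intervalIntegrable a b) ((by fun_prop : Continuous _).intervalIntegrable a b)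
  rw [hφa, hφb] at hibp
  calc ∫ x in a..b, (f x * f' x - g x * g' x) * φ x
      = ∫ x in a..b, φ x * (f x * f' x - g x * g' x) := integral_congr fun x _ ↦ mul_comm _ _
    _ = -∫ x in a..b, φ' x * ((f x + g x) * (f x - g x) / 2) := by rw [hibp]; ring
    _ = -(1 / 2) * ∫ x in a..b, (f x + g x) * (f x - g x) * φ' x := by
        rw [neg_mul, ← intervalIntegral.integral_const_mul]
        exact congrArg _ (integral_congr fun x _ ↦ by ring)

theorem abs_integral_mul_mul_le_of_apply_left_eq_zero {a b : ℝ} (hab : a ≤ b)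
    {u u' d ψ : ℝ → ℝ} (hu' : Continuous u') (hu : ∀ x, HasDerivAt u (u' x) x) (hua : u a = 0)
    (hd : Continuous d) (hψ : Continuous ψ) :
    |∫ x in a..b, u x * d x * ψ x| ≤
      √(∫ x in a..b, ψ x ^ 2) * √((∫ x in a..b, u x ^ 2) + ∫ x in a..b, u' x ^ 2) *
        √(∫ x in a..b, d x ^ 2) := by
  set H := (∫ x in a..b, u x ^ 2) + ∫ x in a..b, u' x ^ 2
  have huc : Continuous u := continuous_iff_continuousAt.2 fun y ↦ (hu y).continuousAt
  have hH : 0 ≤ H := add_nonneg (integral_nonneg hab fun x _ ↦ sq_nonneg _)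
    (integral_nonneg hab fun x _ ↦ sq_nonneg _)
  have hweighted : ∫ x in a..b, (u x * ψ x) ^ 2 ≤ H * ∫ x in a..b, ψ x ^ 2 := by
    rw [← intervalIntegral.integral_const_mul]
    refine integral_mono_on hab ((by fun_prop : Continuous _).intervalIntegrable a b)
      ((by fun_prop : Continuous _).intervalIntegrable a b) fun x hx ↦ ?_
    rw [mul_pow]
    exact mul_le_mul_of_nonneg_right
      (sq_le_integral_sq_add_integral_deriv_sq hu' hu hua hx) (sq_nonneg _)
  calc |∫ x in a..b, u x * d x * ψ x| = |∫ x in a..b, d x * (u x * ψ x)| := by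
        congr 1; exact integral_congr fun x _ ↦ by ring
    _ ≤ √(∫ x in a..b, d x ^ 2) * √(∫ x in a..b, (u x * ψ x) ^ 2) :=
        abs_intervalIntegral_mul_le_sqrt_mul_sqrt hab hd (huc.mul hψ)
    _ ≤ √(∫ x in a..b, d x ^ 2) * √(H * ∫ x in a..b, ψ x ^ 2) := by gcongr
    _ = √(∫ x in a..b, ψ x ^ 2) * √H * √(∫ x in a..b, d x ^ 2) := by
        rw [Real.sqrt_mul hH]; ring

theorem abs_integral_mul_deriv_sub_mul_deriv_mul_le {a b : ℝ} (hab : a ≤ b)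
    {f f' g g' φ φ' : ℝ → ℝ} (hf' : Continuous f') (hg' : Continuous g') (hφ' : Continuous φ')
    (hf : ∀ x, HasDerivAt f (f' x) x) (hg : ∀ x, HasDerivAt g (g' x) x)
    (hφ : ∀ x, HasDerivAt φ (φ' x) x) (hfa : f a = 0) (hga : g a = 0)
    (hφa : φ a = 0) (hφb : φ b = 0) :
    |∫ x in a..b, (f x * f' x - g x * g' x) * φ x| ≤
      1 / 2 * √(∫ x in a..b, φ' x ^ 2) *
        √((∫ x in a..b, (f x + g x) ^ 2) + ∫ x in a..b, (f' x + g' x) ^ 2) *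
        √(∫ x in a..b, (f x - g x) ^ 2) := by
  have hfc : Continuous f := continuous_iff_continuousAt.2 fun y ↦ (hf y).continuousAt
  have hgc : Continuous g := continuous_iff_continuousAt.2 fun y ↦ (hg y).continuousAt
  rw [integral_mul_deriv_sub_mul_deriv_mul_eq hf' hg' hφ' hf hg hφ hφa hφb, abs_mul,
    abs_of_nonpos (by norm_num), mul_assoc, mul_assoc, neg_neg]
  gcongr
  simpa only [mul_assoc, Pi.add_apply, Pi.sub_apply] using
    abs_integral_mul_mul_le_of_apply_left_eq_zero hab (hf'.add hg') (fun x ↦ (hf x).add (hg x))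
      (by simp [hfa, hga]) (hfc.sub hgc) hφ'

theorem abs_intervalIntegral_le_mul_sqrt_integral_mul_sqrt_integral {a b c : ℝ} (hab : a ≤ b)
    (hc : 0 ≤ c) {F A B : ℝ → ℝ} (hF : Continuous F) (hA : Continuous A) (hB : Continuous B)
    (hA₀ : ∀ t, 0 ≤ A t) (hB₀ : ∀ t, 0 ≤ B t)
    (hFAB : ∀ t ∈ Icc a b, |F t| ≤ c * √(A t) * √(B t)) :
    |∫ t in a..b, F t| ≤ c * √(∫ t in a..b, A t) * √(∫ t in a..b, B t) := by
  calc |∫ t in a..b, F t| ≤ ∫ t in a..b, |F t| := abs_integral_le_integral_abs hab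
    _ ≤ ∫ t in a..b, c * √(A t) * √(B t) :=
        integral_mono_on hab (hF.abs.intervalIntegrable a b)
          ((by fun_prop : Continuous _).intervalIntegrable a b) hFAB
    _ = c * ∫ t in a..b, √(A t) * √(B t) := by
        simp only [mul_assoc]; exact intervalIntegral.integral_const_mul _ _
    _ ≤ c * (√(∫ t in a..b, √(A t) ^ 2) * √(∫ t in a..b, √(B t) ^ 2)) := by
        gcongr
        exact (le_abs_self _).trans (abs_intervalIntegral_mul_le_sqrt_mul_sqrt hab
          (by fun_prop) (by fun_prop))
    _ = c * √(∫ t in a..b, A t) * √(∫ t in a..b, B t) := by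
        simp only [Real.sq_sqrt (hA₀ _), Real.sq_sqrt (hB₀ _), mul_assoc]

/-- Step 2 of the proof of Lemma 2.4: the estimate transferring strong
`L²(0,T;L²[0,1])` convergence to convergence of the Burgers nonlinear terms.
For `v, w` continuous, `C¹` in the spatial variable with Dirichlet boundary values,
and `φ ∈ C¹` vanishing at the endpoints,
`|∫₀ᵀ∫₀¹ (v ∂ₓv - w ∂ₓw) φ| ≤ (1/2) ‖φ'‖₂ ‖v+w‖_{L²(0,T;H¹)} ‖v-w‖_{L²(0,T;L²)}`. -/
theorem burgers_nonlinearity_difference_estimate (T : ℝ) (hT : 0 < T)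
    (v w v' w' : ℝ → ℝ → ℝ)
    (hv : Continuous (Function.uncurry v)) (hw : Continuous (Function.uncurry w))
    (hv' : Continuous (Function.uncurry v')) (hw' : Continuous (Function.uncurry w'))
    (hdv : ∀ t x : ℝ, HasDerivAt (v t) (v' t x) x)
    (hdw : ∀ t x : ℝ, HasDerivAt (w t) (w' t x) x)
    (hvb : ∀ t ∈ Icc (0:ℝ) T, v t 0 = 0 ∧ v t 1 = 0)
    (hwb : ∀ t ∈ Icc (0:ℝ) T, w t 0 = 0 ∧ w t 1 = 0)
    (φ : ℝ → ℝ) (hφ : ContDiff ℝ 1 φ) (hφ0 : φ 0 = 0) (hφ1 : φ 1 = 0) :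
    |∫ t in (0:ℝ)..T, ∫ x in (0:ℝ)..1,
        (v t x * v' t x - w t x * w' t x) * φ x| ≤
      (1/2) * Real.sqrt (∫ x in (0:ℝ)..1, deriv φ x ^ 2) *
        Real.sqrt (∫ t in (0:ℝ)..T,
          ((∫ x in (0:ℝ)..1, (v t x + w t x) ^ 2) +
            ∫ x in (0:ℝ)..1, (v' t x + w' t x) ^ 2)) *
        Real.sqrt (∫ t in (0:ℝ)..T, ∫ x in (0:ℝ)..1, (v t x - w t x) ^ 2) := by
  have hφ' : Continuous (deriv φ) := hφ.continuous_deriv le_rfl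
  have hdφ (x : ℝ) : HasDerivAt φ (deriv φ x) x := (hφ.differentiable one_ne_zero x).hasDerivAt
  have hsq₀ (f : ℝ → ℝ) : 0 ≤ ∫ x in (0:ℝ)..1, f x ^ 2 :=
    integral_nonneg zero_le_one fun x _ ↦ sq_nonneg _
  refine abs_intervalIntegral_le_mul_sqrt_integral_mul_sqrt_integral hT.le (by positivity)
    (by fun_prop) (by fun_prop) (by fun_prop) (fun _ ↦ add_nonneg (hsq₀ _) (hsq₀ _))
    (fun _ ↦ hsq₀ _) fun t ht ↦ ?_
  exact abs_integral_mul_deriv_sub_mul_deriv_mul_le zero_le_one (hv'.uncurry_left t)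
    (hw'.uncurry_left t) hφ' (hdv t) (hdw t) hdφ (hvb t ht).1 (hwb t ht).1 hφ0 hφ1
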